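/- arXiv:1905.10607 — 3 statements merged into one kernel-verified Lean document; each statement's English description precedes it below -/
import Mathlib

section
/- Let H be a class of binary functions on a set X with finite VC dimension d. For any finite sample X = {x₁,…,xₙ} ⊆ X with n ≥ d, the number of distinct labelings {(h(x₁),…,h(xₙ)) : h ∈ H} is at most (en/d)^d. -/
/-!
A labeling of `S` by `h` is the same as the trace `{x ∈ S | h x}`, and the traces of `H` form a
family of subsets of `S` that shatters only sets of size at most `d`. Pajor's form of the
Sauer–Shelah lemma bounds a family by the number of sets it shatters, hence by
`∑ k ≤ d, (n choose k)`. Weighting the `k`-th term by `(d/n)^k ≥ (d/n)^d` and comparing with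
`(1 + d/n)^n ≤ e^d` gives `(e n / d)^d`.
-/

/-- A finite set `s` is shattered by the class `H` of binary functions if every
subset of `s` is picked out by some `h ∈ H`. -/
def Shatters {X : Type*} (H : Set (X → Bool)) (s : Finset X) : Prop :=
  ∀ t ⊆ s, ∃ h ∈ H, ∀ x ∈ s, (h x = true ↔ x ∈ t)

open Finset Real

lemma sum_Iic_choose_mul_pow_le_one_add_pow {n d : ℕ} (hdn : d ≤ n) {x : ℝ} (hx : 0 ≤ x) :
    ∑ k ∈ Iic d, (n.choose k : ℝ) * x ^ k ≤ (1 + x) ^ n := by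
  have hsub : Iic d ⊆ range (n + 1) := fun k hk => mem_range.2 (by grind)
  calc ∑ k ∈ Iic d, (n.choose k : ℝ) * x ^ k
      ≤ ∑ k ∈ range (n + 1), (n.choose k : ℝ) * x ^ k :=
        sum_le_sum_of_subset_of_nonneg hsub fun k _ _ => by positivity
    _ = (1 + x) ^ n := by
        rw [add_comm 1 x, add_pow]
        exact sum_congr rfl fun k _ => by ring

lemma sum_Iic_choose_le_exp_mul_div_pow {n d : ℕ} (hd : 0 < d) (hdn : d ≤ n) :
    ∑ k ∈ Iic d, (n.choose k : ℝ) ≤ (exp 1 * n / d) ^ d := by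
  have hn : (0 : ℝ) < n := by exact_mod_cast hd.trans_le hdn
  have hd' : (0 : ℝ) < d := by exact_mod_cast hd
  set x : ℝ := d / n with hx
  have hx0 : 0 < x := by positivity
  have hx1 : x ≤ 1 := (div_le_one hn).2 (by exact_mod_cast hdn)
  have key : x ^ d * ∑ k ∈ Iic d, (n.choose k : ℝ) ≤ exp 1 ^ d :=
    calc x ^ d * ∑ k ∈ Iic d, (n.choose k : ℝ)
        ≤ ∑ k ∈ Iic d, (n.choose k : ℝ) * x ^ k := by
          rw [mul_sum]
          refine sum_le_sum fun k hk => ?_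
          rw [mul_comm]
          exact mul_le_mul_of_nonneg_left (pow_le_pow_of_le_one hx0.le hx1 (mem_Iic.1 hk))
            (Nat.cast_nonneg _)
      _ ≤ (1 + x) ^ n := sum_Iic_choose_mul_pow_le_one_add_pow hdn hx0.le
      _ ≤ exp x ^ n := by gcongr; linarith [add_one_le_exp x]
      _ = exp 1 ^ d := by rw [← exp_nat_mul, ← exp_nat_mul, hx]; field_simp
  calc ∑ k ∈ Iic d, (n.choose k : ℝ) ≤ exp 1 ^ d / x ^ d := by
        rwa [le_div_iff₀' (by positivity)]
    _ = (exp 1 * n / d) ^ d := by rw [← div_pow, hx]; field_simp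

lemma card_le_sum_choose_of_shatters_card_le {α : Type*} [DecidableEq α] {𝒜 : Finset (Finset α)}
    {S : Finset α} {d : ℕ} (h𝒜 : ∀ u ∈ 𝒜, u ⊆ S) (hd : ∀ s, 𝒜.Shatters s → #s ≤ d) :
    #𝒜 ≤ ∑ k ∈ Iic d, (#S).choose k := by
  simp_rw [← card_powersetCard]
  refine (card_le_card_shatterer 𝒜).trans <|
    (card_le_card fun s hs => mem_biUnion.2 ⟨#s, ?_⟩).trans card_biUnion_le
  have hs := mem_shatterer.1 hs
  obtain ⟨u, hu, hsu⟩ := hs.exists_superset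
  exact ⟨mem_Iic.2 (hd s hs), mem_powersetCard.2 ⟨hsu.trans (h𝒜 u hu), rfl⟩⟩

section Trace

variable {X : Type*}

open Classical in
noncomputable def trace (H : Set (X → Bool)) (S : Finset X) : Finset (Finset X) :=
  S.powerset.filter fun t => ∃ h ∈ H, {x ∈ S | h x} = t

lemma coe_trace (H : Set (X → Bool)) (S : Finset X) :
    (trace H S : Set (Finset X)) = (fun h => {x ∈ S | h x}) '' H := by
  ext t
  simp only [trace, coe_filter, Set.mem_ofPred_eq, Set.mem_image, mem_powerset]
  exact ⟨And.right, fun ⟨h, hH, ht⟩ => ⟨ht ▸ filter_subset _ _, h, hH, ht⟩⟩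

lemma subset_of_mem_trace {H : Set (X → Bool)} {S u : Finset X} (hu : u ∈ trace H S) : u ⊆ S := by
  simp only [trace, mem_filter, mem_powerset] at hu
  exact hu.1

lemma ncard_restrict_image_eq_card_trace (H : Set (X → Bool)) (S : Finset X) :
    ((fun h : X → Bool => fun x : {x // x ∈ S} => h x.1) '' H).ncard = #(trace H S) := by
  let support (g : {x // x ∈ S} → Bool) : Finset X :=
    {x ∈ S.attach | g x}.map (Function.Embedding.subtype _)
  have support_injective : support.Injective := by
    intro g g' hgg'
    funext x
    simpa [support] using congrArg (x.1 ∈ ·) hgg'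
  rw [← Set.ncard_coe_finset, coe_trace, ← Set.ncard_image_of_injective _ support_injective,
    Set.image_image]
  congr 1
  refine Set.image_congr fun h _ => ?_
  ext x
  simp [support, and_comm]

lemma shatters_of_shatters_trace {H : Set (X → Bool)} {S s : Finset X} [DecidableEq X]
    (hs : (trace H S).Shatters s) : Shatters H s := by
  intro t hts
  obtain ⟨u, hu, hsu⟩ := hs.exists_superset
  have hsS : s ⊆ S := hsu.trans (subset_of_mem_trace hu)
  obtain ⟨v, hv, rfl⟩ := hs hts
  obtain ⟨h, hH, rfl⟩ : ∃ h ∈ H, {x ∈ S | h x} = v := by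
    simpa using (Set.ext_iff.1 (coe_trace H S) v).1 hv
  exact ⟨h, hH, fun x hx => by simp [hx, hsS hx]⟩

end Trace

/-- Sauer–Shelah lemma: if every set shattered by `H` has size at most `d`
(i.e. the VC dimension of `H` is at most `d`), then the number of distinct
labelings induced by `H` on any sample `S` with `|S| = n ≥ d` is at most
`(e·n/d)^d`. -/
theorem sauer_lemma {X : Type*} (H : Set (X → Bool)) (d : ℕ) (hd : 0 < d)
    (hVC : ∀ s : Finset X, Shatters H s → s.card ≤ d)
    (S : Finset X) (hn : d ≤ S.card) :
    (((fun h : X → Bool => fun x : {x // x ∈ S} => h x.1) '' H).ncard : ℝ) ≤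
      (Real.exp 1 * S.card / d) ^ d := by
  classical
  have hcard : #(trace H S) ≤ ∑ k ∈ Iic d, (#S).choose k :=
    card_le_sum_choose_of_shatters_card_le (fun _ => subset_of_mem_trace)
      fun s hs => hVC s (shatters_of_shatters_trace hs)
  rw [ncard_restrict_image_eq_card_trace]
  calc (#(trace H S) : ℝ) ≤ ∑ k ∈ Iic d, ((#S).choose k : ℝ) := by exact_mod_cast hcard
    _ ≤ _ := sum_Iic_choose_le_exp_mul_div_pow hd hn
end

section
/- Let L(p,γ,λ) = err(p) + λᵀ r(p,γ) be the Lagrangian with r(p,γ) ∈ ℝ^{2n} the vector of constraint values, err(p) ∈ [0,1], and Λ = {λ ∈ ℝ₊^{2n} : ‖λ‖₁ ≤ B}. Suppose (p̂, γ̂, λ̂) is a ν-approximate equilibrium: L(p̂,γ̂,λ̂) ≤ L(p,γ,λ̂) + ν for all feasible (p,γ), and L(p̂,γ̂,λ̂) ≥ L(p̂,γ̂,λ) − ν for all λ ∈ Λ. If (p,γ) is any point with r(p,γ) ≤ 0 componentwise, then err(p̂) ≤ err(p) + 2ν. -/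
/-- Approximate equilibrium implies approximate optimality of the primal player:
if `(p̂,γ̂,l̂)` is a `ν`-approximate equilibrium of the Lagrangian game
`L(p,γ,l) = err p + lᵀ r(p,γ)`, then `err p̂ ≤ err p + 2ν` for any feasible `(p,γ)`. -/
theorem equilibrium_accuracy {Pt Γ : Type*} (n : ℕ) (hn : 0 < n)
    (B ν : ℝ) (hB : 0 < B) (hν : 0 ≤ ν)
    (err : Pt → ℝ) (herr : ∀ q, err q ∈ Set.Icc (0 : ℝ) 1)
    (r : Pt → Γ → Fin (2 * n) → ℝ)
    (phat : Pt) (γhat : Γ) (lhat : Fin (2 * n) → ℝ)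
    (hlhat : (∀ i, 0 ≤ lhat i) ∧ ∑ i, lhat i ≤ B)
    (heq1 : ∀ (q : Pt) (γ : Γ), (∀ i, r q γ i ≤ 0) →
      err phat + ∑ i, lhat i * r phat γhat i ≤
        err q + ∑ i, lhat i * r q γ i + ν)
    (heq2 : ∀ lam : Fin (2 * n) → ℝ, ((∀ i, 0 ≤ lam i) ∧ ∑ i, lam i ≤ B) →
      err phat + ∑ i, lhat i * r phat γhat i ≥
        err phat + ∑ i, lam i * r phat γhat i - ν)
    (q : Pt) (γ : Γ) (hfeas : ∀ i, r q γ i ≤ 0) :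
    err phat ≤ err q + 2 * ν := by
  have h0 := heq2 (fun _ => 0) ⟨fun _ => le_refl 0, by simp [hB.le]⟩
  simp only [zero_mul, Finset.sum_const_zero] at h0
  have h1 := heq1 q γ hfeas
  have h2 : ∑ i, lhat i * r q γ i ≤ 0 :=
    Finset.sum_nonpos fun i _ => mul_nonpos_of_nonneg_of_nonpos (hlhat.1 i) (hfeas i)
  linarith
end

section
/- With the setup of the previous statement (ν-approximate equilibrium (p̂,γ̂,λ̂), errors in [0,1], Λ the ℓ₁-ball of radius B in ℝ₊^{2n}, and at least one feasible point (p,γ) with r(p,γ) ≤ 0), every coordinate of the constraint vector at the equilibrium is bounded: max_k r_k(p̂,γ̂) ≤ (1 + 2ν)/B. -/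
/-- Approximate equilibrium implies approximate feasibility: every coordinate of
the constraint vector at the equilibrium point is at most `(1 + 2ν)/B`. -/
theorem equilibrium_feasibility {Pt Γ : Type*} (n : ℕ) (hn : 0 < n)
    (B ν : ℝ) (hB : 0 < B) (hν : 0 ≤ ν)
    (err : Pt → ℝ) (herr : ∀ q, err q ∈ Set.Icc (0 : ℝ) 1)
    (r : Pt → Γ → Fin (2 * n) → ℝ)
    (phat : Pt) (γhat : Γ) (lhat : Fin (2 * n) → ℝ)
    (hlhat : (∀ i, 0 ≤ lhat i) ∧ ∑ i, lhat i ≤ B)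
    (heq1 : ∀ (q : Pt) (γ : Γ), (∀ i, r q γ i ≤ 0) →
      err phat + ∑ i, lhat i * r phat γhat i ≤
        err q + ∑ i, lhat i * r q γ i + ν)
    (heq2 : ∀ lam : Fin (2 * n) → ℝ, ((∀ i, 0 ≤ lam i) ∧ ∑ i, lam i ≤ B) →
      err phat + ∑ i, lhat i * r phat γhat i ≥
        err phat + ∑ i, lam i * r phat γhat i - ν)
    (q : Pt) (γ : Γ) (hfeas : ∀ i, r q γ i ≤ 0) :
    ∀ k, r phat γhat k ≤ (1 + 2 * ν) / B := by
  intro k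
  -- use lam = B * e_k in heq2
  set lam : Fin (2 * n) → ℝ := fun i => if i = k then B else 0 with hlam
  have hsum : ∑ i, lam i = B := by simp [hlam]
  have hsum2 : ∑ i, lam i * r phat γhat i = B * r phat γhat k := by
    rw [Finset.sum_eq_single k]
    · simp [hlam]
    · intro b _ hb; simp [hlam, hb]
    · simp
  have h2 := heq2 lam ⟨fun i => by simp only [hlam]; split <;> simp [hB.le], hsum.le⟩
  have h1 := heq1 q γ hfeas
  have hle0 : ∑ i, lhat i * r q γ i ≤ 0 := by
    apply Finset.sum_nonpos
    intro i _
    exact mul_nonpos_of_nonneg_of_nonpos (hlhat.1 i) (hfeas i)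
  have hq := herr q
  have hp := herr phat
  have key : B * r phat γhat k ≤ 1 + 2 * ν := by
    rw [hsum2] at h2
    nlinarith [hq.2, hp.1]
  rw [le_div_iff₀ hB]
  linarith
end
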